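/- Let π : G → H be a continuous surjective homomorphism of topological groups such that for each normal admissible subgroup K of G, the image π(K) contains a normal admissible subgroup of H. If G is simply sm-factorizable and H is ω-narrow, then H is simply sm-factorizable. -/

import Mathlib

open Topology TopologicalSpace Pointwise Function Set

def IsCozero {X : Type*} [TopologicalSpace X] (U : Set X) : Prop :=
  ∃ f : X → ℝ, Continuous f ∧ U = f ⁻¹' {x : ℝ | x ≠ 0}

/-- A topological group is simply sm-factorizable if every cozero set is saturated with
respect to some continuous surjective homomorphism onto a separable metrizable topological group. -/
def SimplySMFactorizable (G : Type*) [Group G] [TopologicalSpace G] : Prop :=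
  ∀ U : Set G, IsCozero U →
    ∃ (H : Type) (gH : Group H) (tH : TopologicalSpace H),
      letI := gH
      letI := tH
      IsTopologicalGroup H ∧ SeparableSpace H ∧ MetrizableSpace H ∧
        ∃ π : G →* H, Continuous π ∧ Surjective π ∧ ⇑π ⁻¹' (⇑π '' U) = U

/-- A subset N of a topological group is an admissible subgroup if it is the intersection of a
sequence of open symmetric neighborhoods of the identity with Uₙ₊₁·Uₙ₊₁ ⊆ Uₙ. -/
def IsAdmissible {G : Type*} [Group G] [TopologicalSpace G] (N : Set G) : Prop :=
  ∃ U : ℕ → Set G,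
    (∀ n, IsOpen (U n) ∧ (1 : G) ∈ U n ∧ (U n)⁻¹ = U n) ∧
    (∀ n, U (n + 1) * U (n + 1) ⊆ U n) ∧ N = ⋂ n, U n

/-- A (para)topological group is ω-narrow if each neighborhood of the identity translates
over a countable set to cover the group. -/
def OmegaNarrow (G : Type*) [Group G] [TopologicalSpace G] : Prop :=
  ∀ U ∈ 𝓝 (1 : G), ∃ A : Set G, A.Countable ∧ A * U = Set.univ ∧ U * A = Set.univ

/-!
Pull a cozero set `U ⊆ H` back to `G` and factor it through `p : G → M` with `M` separable
metrizable. Metrizable groups have admissible sequences with intersection `{1}`, so `ker p` is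
admissible and `π (ker p)` contains an admissible `L`; as `p` saturates `π ⁻¹' U`, `U * L = U`.
In the ω-narrow group `H`, Guran's argument shrinks a sequence defining `L` to an admissible
sequence that is moreover eventually invariant under each conjugation. It is then a base at `1` of
a coarser, first countable and separable group topology on `H`, whose separation quotient is a
separable metrizable group (Birkhoff–Kakutani). The quotient map has kernel inside `L`, hence
saturates `U`.
-/

open Filter

section AdmissibleSeq

variable {G : Type*} [Group G] [TopologicalSpace G]

structure IsAdmissibleSeq (U : ℕ → Set G) : Prop where
  isOpen : ∀ n, IsOpen (U n)
  one_mem : ∀ n, (1 : G) ∈ U n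
  inv_eq : ∀ n, (U n)⁻¹ = U n
  mul_subset : ∀ n, U (n + 1) * U (n + 1) ⊆ U n

theorem isAdmissible_iff {N : Set G} :
    IsAdmissible N ↔ ∃ U : ℕ → Set G, IsAdmissibleSeq U ∧ N = ⋂ n, U n := by
  constructor
  · rintro ⟨U, hU, hmul, rfl⟩
    exact ⟨U, ⟨fun n => (hU n).1, fun n => (hU n).2.1, fun n => (hU n).2.2, hmul⟩, rfl⟩
  · rintro ⟨U, hU, rfl⟩
    exact ⟨U, fun n => ⟨hU.isOpen n, hU.one_mem n, hU.inv_eq n⟩, hU.mul_subset, rfl⟩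

namespace IsAdmissibleSeq

variable {U : ℕ → Set G}

theorem mem_nhds (hU : IsAdmissibleSeq U) (n : ℕ) : U n ∈ 𝓝 (1 : G) :=
  (hU.isOpen n).mem_nhds (hU.one_mem n)

theorem inv_mem (hU : IsAdmissibleSeq U) {n : ℕ} {x : G} (hx : x ∈ U n) : x⁻¹ ∈ U n := by
  rw [← hU.inv_eq n]
  exact inv_mem_inv.2 hx

theorem mul_mem (hU : IsAdmissibleSeq U) {n : ℕ} {x y : G} (hx : x ∈ U (n + 1))
    (hy : y ∈ U (n + 1)) : x * y ∈ U n :=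
  hU.mul_subset n (mul_mem_mul hx hy)

theorem antitone (hU : IsAdmissibleSeq U) : Antitone U :=
  antitone_nat_of_succ_le fun n => (subset_mul_left _ (hU.one_mem _)).trans (hU.mul_subset n)

theorem preimage {H : Type*} [Group H] [TopologicalSpace H] {V : ℕ → Set H}
    (hV : IsAdmissibleSeq V) {f : G →* H} (hf : Continuous f) :
    IsAdmissibleSeq fun n => f ⁻¹' V n where
  isOpen n := (hV.isOpen n).preimage hf
  one_mem n := by simpa using hV.one_mem n
  inv_eq n := by
    ext x
    rw [Set.mem_inv, mem_preimage, mem_preimage, map_inv, ← Set.mem_inv, hV.inv_eq n]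
  mul_subset n := by
    rintro _ ⟨x, hx, y, hy, rfl⟩
    simpa using hV.mul_mem hx hy

abbrev groupFilterBasis (hV : IsAdmissibleSeq U)
    (hconj : ∀ g j, ∃ m, ∀ x ∈ U m, g * x * g⁻¹ ∈ U j) : GroupFilterBasis G where
  sets := range U
  nonempty := range_nonempty U
  inter_sets := by
    rintro _ _ ⟨i, rfl⟩ ⟨j, rfl⟩
    exact ⟨U (max i j), mem_range_self _,
      subset_inter (hV.antitone (le_max_left i j)) (hV.antitone (le_max_right i j))⟩
  one' := by
    rintro _ ⟨n, rfl⟩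
    exact hV.one_mem n
  mul' := by
    rintro _ ⟨n, rfl⟩
    exact ⟨U (n + 1), mem_range_self _, hV.mul_subset n⟩
  inv' := by
    rintro _ ⟨n, rfl⟩
    exact ⟨U n, mem_range_self _, fun x hx => hV.inv_mem hx⟩
  conj' := by
    rintro g _ ⟨j, rfl⟩
    obtain ⟨m, hm⟩ := hconj g j
    exact ⟨U m, mem_range_self _, hm⟩

end IsAdmissibleSeq

end AdmissibleSeq

namespace GroupFilterBasis

variable {G : Type*} [Group G] (B : GroupFilterBasis G)

theorem firstCountableTopology_of_countable (hB : B.sets.Countable) :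
    @FirstCountableTopology G B.topology :=
  let _ := B.topology
  ⟨fun x => HasCountableBasis.isCountablyGenerated ⟨B.nhds_hasBasis x, hB⟩⟩

theorem separableSpace_of_countable (hB : B.sets.Countable)
    (hA : ∀ U ∈ B, ∃ A : Set G, A.Countable ∧ A * U = univ) :
    @SeparableSpace G B.topology := by
  let _ := B.topology
  choose! A hA hAU using hA
  refine ⟨⋃ U ∈ B.sets, A U, hB.biUnion hA, fun x => ?_⟩
  rw [mem_closure_iff_nhds_basis (B.nhds_hasBasis x)]
  intro U hU
  obtain ⟨U', hU', hU'U⟩ := B.inv' hU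
  obtain ⟨a, ha, u, hu, rfl⟩ := ((hAU U' hU') ▸ mem_univ x : x ∈ A U' * U')
  exact ⟨a, mem_biUnion hU' ha, u⁻¹, hU'U hu, by simp⟩

theorem mem_of_inseparable_one {x : G} (hx : @Inseparable G B.topology x 1) {U : Set G}
    (hU : U ∈ B) : x ∈ U :=
  let _ := B.topology
  mem_of_mem_nhds (specializes_iff_nhds.1 hx.specializes (B.nhds_one_hasBasis.mem_of_mem hU))

theorem le_topology [TopologicalSpace G] [IsTopologicalGroup G]
    (hB : ∀ U ∈ B, U ∈ 𝓝 (1 : G)) : ‹TopologicalSpace G› ≤ B.topology := by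
  refine le_of_nhds_le_nhds fun x => (B.nhds_hasBasis x).ge_iff.2 fun U hU => ?_
  rw [← map_mul_left_nhds_one x]
  exact image_mem_map (hB U hU)

end GroupFilterBasis

section TopologicalGroup

variable {G : Type*} [Group G] [TopologicalSpace G] [IsTopologicalGroup G]

theorem exists_open_inv_eq_mul_subset {S : Set G} (hS : S ∈ 𝓝 (1 : G)) :
    ∃ V : Set G, IsOpen V ∧ (1 : G) ∈ V ∧ V⁻¹ = V ∧ V * V ⊆ S := by
  obtain ⟨V, hVo, hV1, hVS⟩ := exists_open_nhds_one_mul_subset hS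
  refine ⟨V ∩ V⁻¹, hVo.inter hVo.inv, ⟨hV1, by simpa using hV1⟩, by simp [inter_comm],
    (mul_subset_mul inter_subset_left inter_subset_left).trans hVS⟩

theorem exists_sqrt_nhds_one : ∃ r : Set G → Set G, ∀ S, IsOpen (r S) ∧ (1 : G) ∈ r S ∧
    (r S)⁻¹ = r S ∧ (S ∈ 𝓝 (1 : G) → r S * r S ⊆ S) := by
  have (S : Set G) : ∃ V : Set G,
      IsOpen V ∧ (1 : G) ∈ V ∧ V⁻¹ = V ∧ (S ∈ 𝓝 (1 : G) → V * V ⊆ S) := by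
    by_cases hS : S ∈ 𝓝 (1 : G)
    · obtain ⟨V, hVo, hV1, hVinv, hVS⟩ := exists_open_inv_eq_mul_subset hS
      exact ⟨V, hVo, hV1, hVinv, fun _ => hVS⟩
    · exact ⟨univ, isOpen_univ, mem_univ _, inv_univ, fun h => absurd h hS⟩
  choose r hr using this
  exact ⟨r, hr⟩

/-- Recursion on `(V n, Q n)` with `Q n k = ⋂ j ≤ n, Γ (V j) k`: `V (n + 1)` only has to lie in
the finitely many `Q n k`, `k ≤ n`, yet this puts it eventually inside every `Γ (V j) k`. -/
theorem exists_isAdmissibleSeq_subset {W : ℕ → Set G} (hW : ∀ n, W n ∈ 𝓝 (1 : G))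
    {Γ : Set G → ℕ → Set G} (hΓ : ∀ S ∈ 𝓝 (1 : G), ∀ k, Γ S k ∈ 𝓝 (1 : G)) :
    ∃ V : ℕ → Set G, IsAdmissibleSeq V ∧ (∀ n, V n ⊆ W n) ∧
      ∀ j k, ∃ m, V m ⊆ Γ (V j) k := by
  obtain ⟨sqrt, hsqrt⟩ := exists_sqrt_nhds_one (G := G)
  choose hsqrt_open hsqrt_one hsqrt_inv hsqrt_mul using hsqrt
  let step (n : ℕ) (s : Set G × (ℕ → Set G)) : Set G × (ℕ → Set G) :=
    let V := sqrt (s.1 ∩ W (n + 1) ∩ ⋂ k ≤ n, s.2 k)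
    (V, fun k => s.2 k ∩ Γ V k)
  let seq (n : ℕ) : Set G × (ℕ → Set G) := Nat.rec (sqrt (W 0), Γ (sqrt (W 0))) step n
  set V : ℕ → Set G := fun n => (seq n).1
  set Q : ℕ → ℕ → Set G := fun n => (seq n).2
  have hV_basic (n : ℕ) : IsOpen (V n) ∧ (1 : G) ∈ V n ∧ (V n)⁻¹ = V n := by
    cases n <;> exact ⟨hsqrt_open _, hsqrt_one _, hsqrt_inv _⟩
  have hV_nhds (n : ℕ) : V n ∈ 𝓝 (1 : G) := (hV_basic n).1.mem_nhds (hV_basic n).2.1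
  have hQ_nhds (n k : ℕ) : Q n k ∈ 𝓝 (1 : G) := by
    induction n with
    | zero => exact hΓ _ (hV_nhds 0) k
    | succ n ih => exact inter_mem ih (hΓ _ (hV_nhds (n + 1)) k)
  have hV_mul (n : ℕ) :
      V (n + 1) * V (n + 1) ⊆ V n ∩ W (n + 1) ∩ ⋂ k ≤ n, Q n k :=
    hsqrt_mul _ <| inter_mem (inter_mem (hV_nhds n) (hW _)) <|
      (biInter_mem (finite_le_nat n)).2 fun k _ => hQ_nhds n k
  have hV : IsAdmissibleSeq V :=
    ⟨fun n => (hV_basic n).1, fun n => (hV_basic n).2.1, fun n => (hV_basic n).2.2,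
      fun n => (hV_mul n).trans (inter_subset_left.trans inter_subset_left)⟩
  have hV_succ (n : ℕ) : V (n + 1) ⊆ V n ∩ W (n + 1) ∩ ⋂ k ≤ n, Q n k :=
    (subset_mul_left _ (hV.one_mem (n + 1))).trans (hV_mul n)
  have hQ_sub (n k : ℕ) : ∀ j ≤ n, Q n k ⊆ Γ (V j) k := by
    induction n with
    | zero =>
      intro j hj
      obtain rfl := Nat.le_zero.1 hj
      exact subset_rfl
    | succ n ih =>
      intro j hj
      rcases Nat.lt_or_eq_of_le hj with hj | rfl
      · exact inter_subset_left.trans (ih j (Nat.lt_succ_iff.1 hj))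
      · exact inter_subset_right
  refine ⟨V, hV, fun n => ?_, fun j k => ⟨max j k + 1, ?_⟩⟩
  · cases n with
    | zero => exact (subset_mul_left _ (hV.one_mem 0)).trans (hsqrt_mul _ (hW 0))
    | succ n => exact (hV_succ n).trans (inter_subset_left.trans inter_subset_right)
  · refine (hV_succ _).trans (inter_subset_right.trans ?_)
    exact fun x hx => hQ_sub _ k j (le_max_left j k) (mem_iInter₂.1 hx k (le_max_right j k))

end TopologicalGroup

theorem exists_isAdmissibleSeq_iInter_eq_one (M : Type*) [Group M] [TopologicalSpace M]
    [IsTopologicalGroup M] [FirstCountableTopology M] [T1Space M] :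
    ∃ V : ℕ → Set M, IsAdmissibleSeq V ∧ ⋂ n, V n = {1} := by
  obtain ⟨W, hW⟩ := (𝓝 (1 : M)).exists_antitone_basis
  obtain ⟨V, hV, hVW, -⟩ := exists_isAdmissibleSeq_subset hW.mem
    (Γ := fun _ _ => univ) fun _ _ _ => univ_mem
  refine ⟨V, hV, Subset.antisymm ?_ (singleton_subset_iff.2 (mem_iInter.2 hV.one_mem))⟩
  calc ⋂ n, V n ⊆ ⋂ n, W n := iInter_mono hVW
    _ = {1} := by simpa using hW.toHasBasis.ker.symm.trans (ker_nhds 1)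

theorem isAdmissible_ker {G M : Type*} [Group G] [TopologicalSpace G] [Group M]
    [TopologicalSpace M] [IsTopologicalGroup M] [FirstCountableTopology M] [T1Space M]
    {p : G →* M} (hp : Continuous p) : IsAdmissible (p.ker : Set G) := by
  obtain ⟨V, hV, hV_one⟩ := exists_isAdmissibleSeq_iInter_eq_one M
  refine isAdmissible_iff.2 ⟨_, hV.preimage hp, ?_⟩
  rw [MonoidHom.coe_ker, ← preimage_iInter, hV_one]

namespace OmegaNarrow

variable {H : Type*} [Group H] [TopologicalSpace H] [IsTopologicalGroup H]

/-- Write `g = w * a` with `w ∈ W` and `a` in a countable set `A` with `W * A = univ`; then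
`g * O * g⁻¹ ⊆ W * W * W⁻¹ ⊆ U` as soon as `a * O * a⁻¹ ⊆ W`. -/
theorem exists_nhds_conj_subset (hH : OmegaNarrow H) {U : Set H} (hU : U ∈ 𝓝 (1 : H)) :
    ∃ O : ℕ → Set H, (∀ k, O k ∈ 𝓝 (1 : H)) ∧
      ∀ g, ∃ k, ∀ x ∈ O k, g * x * g⁻¹ ∈ U := by
  obtain ⟨W₁, hW₁o, hW₁1, -, hW₁U⟩ := exists_open_inv_eq_mul_subset hU
  obtain ⟨W, hWo, hW1, hWinv, hWW₁⟩ := exists_open_inv_eq_mul_subset (hW₁o.mem_nhds hW₁1)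
  obtain ⟨A, hA, -, hWA⟩ := hH W (hWo.mem_nhds hW1)
  obtain ⟨a, hAa⟩ := countable_iff_exists_subset_range.1 hA
  refine ⟨fun k => (fun x => a k * x * (a k)⁻¹) ⁻¹' W, fun k => ?_, fun g => ?_⟩
  · have hconj : Continuous fun x => a k * x * (a k)⁻¹ :=
      (continuous_mul_const _).comp (continuous_const_mul _)
    refine hconj.continuousAt.preimage_mem_nhds ?_
    simpa using hWo.mem_nhds hW1
  · obtain ⟨w, hw, b, hb, rfl⟩ := (hWA ▸ mem_univ g : g ∈ W * A)
    obtain ⟨k, rfl⟩ := hAa hb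
    refine ⟨k, fun x hx => ?_⟩
    have hw_inv : w⁻¹ ∈ W₁ :=
      (subset_mul_left W hW1).trans hWW₁ (hWinv ▸ inv_mem_inv.2 hw)
    have := hW₁U (mul_mem_mul (hWW₁ (mul_mem_mul hw hx)) hw_inv)
    simpa [mul_assoc] using this

theorem exists_isAdmissibleSeq_conj (hH : OmegaNarrow H) {W : ℕ → Set H}
    (hW : ∀ n, W n ∈ 𝓝 (1 : H)) :
    ∃ V : ℕ → Set H, IsAdmissibleSeq V ∧ (∀ n, V n ⊆ W n) ∧
      ∀ g j, ∃ m, ∀ x ∈ V m, g * x * g⁻¹ ∈ V j := by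
  have hΓ (U : Set H) : ∃ O : ℕ → Set H, U ∈ 𝓝 (1 : H) →
      (∀ k, O k ∈ 𝓝 (1 : H)) ∧ ∀ g, ∃ k, ∀ x ∈ O k, g * x * g⁻¹ ∈ U := by
    by_cases hU : U ∈ 𝓝 (1 : H)
    · exact (hH.exists_nhds_conj_subset hU).imp fun _ h _ => h
    · exact ⟨fun _ => univ, fun h => absurd h hU⟩
  choose Γ hΓ using hΓ
  obtain ⟨V, hV, hVW, hVΓ⟩ := exists_isAdmissibleSeq_subset hW fun S hS => (hΓ S hS).1
  refine ⟨V, hV, hVW, fun g j => ?_⟩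
  obtain ⟨k, hk⟩ := (hΓ (V j) (hV.mem_nhds j)).2 g
  obtain ⟨m, hm⟩ := hVΓ j k
  exact ⟨m, fun x hx => hk x (hm hx)⟩

end OmegaNarrow

theorem IsTopologicalGroup.metrizableSpace_of_firstCountable (G : Type*) [Group G]
    [TopologicalSpace G] [IsTopologicalGroup G] [FirstCountableTopology G] [T0Space G] :
    MetrizableSpace G :=
  let _ := IsTopologicalGroup.rightUniformSpace G
  have : (uniformity G).IsCountablyGenerated := comap.isCountablyGenerated _ _
  UniformSpace.metrizableSpace

instance SeparationQuotient.firstCountableTopology (X : Type*) [TopologicalSpace X]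
    [FirstCountableTopology X] : FirstCountableTopology (SeparationQuotient X) where
  nhds_generated_countable :=
    surjective_mk.forall.2 fun x => map_mk_nhds (x := x) ▸ inferInstance

theorem exists_continuousMulEquiv_of_separable_metrizable (M : Type*) [Group M]
    [TopologicalSpace M] [IsTopologicalGroup M] [SeparableSpace M] [MetrizableSpace M] :
    ∃ (M' : Type) (_ : Group M') (_ : TopologicalSpace M'),
      IsTopologicalGroup M' ∧ SeparableSpace M' ∧ MetrizableSpace M' ∧
        Nonempty (M ≃ₜ* M') := by
  let _ := metrizableSpaceMetric M
  have : Small.{0} M :=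
    small_of_injective (exists_embedding_l_infty M).choose_spec.injective
  let e : M ≃ₜ* Shrink.{0} M :=
    { (Shrink.mulEquiv (α := M)).symm with
      continuous_toFun := (Shrink.homeomorph M).continuous
      continuous_invFun := (Shrink.homeomorph M).symm.continuous }
  exact ⟨Shrink.{0} M, inferInstance, inferInstance, e.symm.isInducing.topologicalGroup e.symm,
    e.surjective.denseRange.separableSpace e.continuous, e.symm.isEmbedding.metrizableSpace,
    ⟨e⟩⟩

theorem exists_separable_metrizable_of_firstCountable (K : Type*) [Group K]
    [TopologicalSpace K] [IsTopologicalGroup K] [FirstCountableTopology K] [SeparableSpace K] :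
    ∃ (M : Type) (_ : Group M) (_ : TopologicalSpace M),
      IsTopologicalGroup M ∧ SeparableSpace M ∧ MetrizableSpace M ∧
        ∃ q : K →* M, Continuous q ∧ Surjective q ∧ ∀ x ∈ q.ker, Inseparable x 1 := by
  have : SeparableSpace (SeparationQuotient K) :=
    SeparationQuotient.surjective_mk.denseRange.separableSpace SeparationQuotient.continuous_mk
  have := IsTopologicalGroup.metrizableSpace_of_firstCountable (SeparationQuotient K)
  obtain ⟨M, _, _, hM, hMsep, hMmet, ⟨e⟩⟩ :=
    exists_continuousMulEquiv_of_separable_metrizable (SeparationQuotient K)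
  refine ⟨M, _, _, hM, hMsep, hMmet,
    e.toMulEquiv.toMonoidHom.comp SeparationQuotient.mkMonoidHom,
    e.continuous.comp SeparationQuotient.continuous_mk,
    e.surjective.comp SeparationQuotient.surjective_mk, fun x hx => ?_⟩
  rw [MonoidHom.mem_ker, MonoidHom.comp_apply, MulEquiv.coe_toMonoidHom,
    MulEquiv.map_eq_one_iff, ← SeparationQuotient.mk_one] at hx
  exact SeparationQuotient.mk_eq_mk.1 hx

theorem OmegaNarrow.exists_ker_subset_of_isAdmissible {H : Type*} [Group H]
    [TopologicalSpace H] [IsTopologicalGroup H] (hH : OmegaNarrow H) {L : Set H}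
    (hL : IsAdmissible L) :
    ∃ (M : Type) (_ : Group M) (_ : TopologicalSpace M),
      IsTopologicalGroup M ∧ SeparableSpace M ∧ MetrizableSpace M ∧
        ∃ q : H →* M, Continuous q ∧ Surjective q ∧ (q.ker : Set H) ⊆ L := by
  obtain ⟨W, hW, rfl⟩ := isAdmissible_iff.1 hL
  obtain ⟨V, hV, hVW, hconj⟩ := hH.exists_isAdmissibleSeq_conj hW.mem_nhds
  let B := hV.groupFilterBasis hconj
  have hB : B.sets.Countable := countable_range V
  have hBA : ∀ U ∈ B, ∃ A : Set H, A.Countable ∧ A * U = univ := by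
    rintro _ ⟨n, rfl⟩
    obtain ⟨A, hA, hAV, -⟩ := hH (V n) (hV.mem_nhds n)
    exact ⟨A, hA, hAV⟩
  obtain ⟨M, _, _, hM, hMsep, hMmet, q, hqc, hqs, hq⟩ :=
    @exists_separable_metrizable_of_firstCountable H _ B.topology B.isTopologicalGroup
      (B.firstCountableTopology_of_countable hB) (B.separableSpace_of_countable hB hBA)
  have hle : ‹TopologicalSpace H› ≤ B.topology := by
    refine B.le_topology ?_
    rintro _ ⟨n, rfl⟩
    exact hV.mem_nhds n
  refine ⟨M, _, _, hM, hMsep, hMmet, q, continuous_le_dom hle hqc, hqs, fun x hx => ?_⟩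
  exact mem_iInter.2 fun n => hVW n (B.mem_of_inseparable_one (hq x hx) (mem_range_self n))

theorem mul_map_mem_of_mem_ker {G H M : Type*} [Group G] [Group H] [Group M] {π : G →* H}
    (hπ : Surjective π) {p : G →* M} {U : Set H}
    (hU : p ⁻¹' (p '' (π ⁻¹' U)) = π ⁻¹' U) {u : H} (hu : u ∈ U) {k : G}
    (hk : k ∈ p.ker) : u * π k ∈ U := by
  obtain ⟨g, rfl⟩ := hπ u
  rw [← map_mul, ← mem_preimage, ← hU]
  exact ⟨g, hu, by rw [map_mul, p.mem_ker.1 hk, mul_one]⟩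

theorem statement11_general {G H : Type*} [Group G] [TopologicalSpace G]
    [Group H] [TopologicalSpace H] [IsTopologicalGroup H]
    (π : G →* H) (hc : Continuous π) (hs : Surjective π)
    (him : ∀ K : Subgroup G, K.Normal → IsAdmissible (K : Set G) →
      ∃ L : Subgroup H, L.Normal ∧ IsAdmissible (L : Set H) ∧ (L : Set H) ⊆ ⇑π '' (K : Set G))
    (hG : SimplySMFactorizable G) (hH : OmegaNarrow H) :
    SimplySMFactorizable H := by
  rintro _ ⟨f, hf, rfl⟩
  obtain ⟨M, _, _, _, _, _, p, hpc, -, hpU⟩ :=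
    hG (π ⁻¹' (f ⁻¹' {x | x ≠ 0})) ⟨f ∘ π, hf.comp hc, rfl⟩
  obtain ⟨L, -, hL, hLp⟩ := him p.ker p.normal_ker (isAdmissible_ker hpc)
  obtain ⟨M', _, _, hM', hsep, hmet, q, hqc, hqs, hqL⟩ :=
    hH.exists_ker_subset_of_isAdmissible hL
  refine ⟨M', _, _, hM', hsep, hmet, q, hqc, hqs,
    Subset.antisymm ?_ (subset_preimage_image _ _)⟩
  rintro y ⟨u, hu, hqu⟩
  obtain ⟨k, hk, hku⟩ := hLp (hqL (show u⁻¹ * y ∈ q.ker by simp [hqu]))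
  simpa [hku] using mul_map_mem_of_mem_ker hs hpU hu hk

/-- If a continuous surjective homomorphism of topological groups sends every normal admissible
subgroup onto a set containing a normal admissible subgroup, the domain is simply
sm-factorizable, and the codomain is ω-narrow, then the codomain is simply sm-factorizable. -/
theorem statement11 {G H : Type*} [Group G] [TopologicalSpace G] [IsTopologicalGroup G]
    [Group H] [TopologicalSpace H] [IsTopologicalGroup H]
    (π : G →* H) (hc : Continuous π) (hs : Surjective π)
    (him : ∀ K : Subgroup G, K.Normal → IsAdmissible (K : Set G) →
      ∃ L : Subgroup H, L.Normal ∧ IsAdmissible (L : Set H) ∧ (L : Set H) ⊆ ⇑π '' (K : Set G))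
    (hG : SimplySMFactorizable G) (hH : OmegaNarrow H) :
    SimplySMFactorizable H :=
  statement11_general π hc hs him hG hH
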